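/- arXiv:math/9912212 — 7 statements merged into one kernel-verified Lean document; each statement's English description precedes it below -/
import Mathlib

section
/- Let E be the exterior algebra on a finite-dimensional K-vector space V, and let A = E/I be a quotient algebra such that A is generated in degree 1 and the pairing A_j × A_{ℓ-j} → A_ℓ is perfect for all j, where ℓ is the top nonzero degree of A. Then the annihilator of A_1 in A is exactly A_ℓ; that is, if c ∈ A is homogeneous of degree d and x∧c = 0 for every x ∈ A_1, then c = 0 unless d = ℓ. -/
/-- Let `A` be a graded quotient of an exterior algebra (so: a graded-commutative graded
`K`-algebra generated in degree 1) with top nonzero degree `ℓ` such that the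
multiplication pairings `A_j × A_{ℓ-j} → A_ℓ` are nondegenerate (perfect).  Then the
annihilator of `A₁` in `A` is exactly `A_ℓ`. -/
theorem stmt1 (K : Type*) [Field K] (A : Type*) [Ring A] [Algebra K A]
    (𝒜 : ℕ → Submodule K A) [GradedAlgebra 𝒜] (ℓ : ℕ)
    (htop : ∀ j, ℓ < j → 𝒜 j = ⊥) (hne : 𝒜 ℓ ≠ ⊥)
    (hgen : ∀ j : ℕ, 𝒜 (j + 1) ≤
      Submodule.span K {x : A | ∃ v ∈ 𝒜 1, ∃ a ∈ 𝒜 j, x = v * a})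
    (hcomm : ∀ i j : ℕ, ∀ a ∈ 𝒜 i, ∀ b ∈ 𝒜 j,
      a * b = ((-1 : ℤ) ^ (i * j)) • (b * a))
    (hnd₁ : ∀ j, j ≤ ℓ → ∀ a ∈ 𝒜 j, (∀ b ∈ 𝒜 (ℓ - j), a * b = 0) → a = 0)
    (hnd₂ : ∀ j, j ≤ ℓ → ∀ b ∈ 𝒜 (ℓ - j), (∀ a ∈ 𝒜 j, a * b = 0) → b = 0) :
    {a : A | ∀ v ∈ 𝒜 1, v * a = 0} = (𝒜 ℓ : Set A) := by
  classical
  ext a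
  constructor
  · intro ha
    simp only [Set.mem_setOf_eq] at ha
    -- each graded component of degree j ≠ ℓ vanishes
    have hcomp : ∀ j, j ≠ ℓ → (DirectSum.decompose 𝒜 a j : A) = 0 := by
      intro j hj
      rcases lt_or_gt_of_ne hj with hlt | hgt
      · -- j < ℓ
        set c : A := (DirectSum.decompose 𝒜 a j : A) with hc
        have hcm : c ∈ 𝒜 j := (DirectSum.decompose 𝒜 a j).2
        -- v * c = 0 for all v ∈ 𝒜 1
        have hvc : ∀ v ∈ 𝒜 1, v * c = 0 := by
          intro v hv
          have := DirectSum.coe_decompose_mul_add_of_left_mem 𝒜 (b := a) (j := j) hv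
          rw [ha v hv] at this
          simpa using this.symm
        -- c * b = 0 for all b ∈ 𝒜 (ℓ - j)
        have key : ∀ x ∈ Submodule.span K
            {x : A | ∃ v ∈ 𝒜 1, ∃ d ∈ 𝒜 (ℓ - j - 1), x = v * d}, c * x = 0 := by
          intro x hx
          induction hx using Submodule.span_induction with
          | mem x hx =>
            obtain ⟨v, hv, d, hd, rfl⟩ := hx
            have hcv : c * v = ((-1 : ℤ) ^ (j * 1)) • (v * c) :=
              hcomm j 1 c hcm v hv
            rw [← mul_assoc, hcv, hvc v hv, smul_zero, zero_mul]
          | zero => simp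
          | add x y _ _ hx hy => rw [mul_add, hx, hy, add_zero]
          | smul t x _ hx => rw [mul_smul_comm, hx, smul_zero]
        have hcb : ∀ b ∈ 𝒜 (ℓ - j), c * b = 0 := by
          intro b hb
          have hj1 : ℓ - j = (ℓ - j - 1) + 1 := by omega
          rw [hj1] at hb
          exact key b (hgen (ℓ - j - 1) hb)
        exact hnd₁ j hlt.le c hcm hcb
      · have hmem := (DirectSum.decompose 𝒜 a j).2
        exact (Submodule.eq_bot_iff _).mp (htop j hgt) _ hmem
    -- hence a ∈ 𝒜 ℓ
    rw [SetLike.mem_coe, ← DirectSum.sum_support_decompose 𝒜 a]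
    apply Submodule.sum_mem
    intro i _
    by_cases hiℓ : i = ℓ
    · subst hiℓ; exact (DirectSum.decompose 𝒜 a i).2
    · rw [hcomp i hiℓ]; exact Submodule.zero_mem _
  · intro ha v hv
    have : v * a ∈ 𝒜 (1 + ℓ) := SetLike.mul_mem_graded hv ha
    rw [htop (1 + ℓ) (by omega)] at this
    simpa using this
end

section
/- Let E be the exterior algebra over a field K on e_1,...,e_n, and let I be a graded ideal of E. If f ∈ E_1 is such that multiplication by f on M = E/I is 'regular' (i.e., the kernel of multiplication by f on M equals f·M), then M is a free module over the subalgebra K⟨f⟩ = K[f]/(f²). -/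
/-!
Multiplication by `f` is a `K`-linear endomorphism `φ` of `M` with `range φ = ker φ`: one
inclusion is `f² = 0`, the other is regularity. For any such `φ`, a complement `W` of `ker φ`
splits `M = W ⊕ φ(W)` with `φ` injective on `W`, so a basis `(gᵢ)` of `W` gives the basis
`{gᵢ, f gᵢ}` of `M`.
-/

universe u

namespace LinearMap

variable {K : Type*} {M : Type u} [DivisionRing K] [AddCommGroup M] [Module K M]

theorem injective_coprod_subtype_comp_of_disjoint_ker {φ : M →ₗ[K] M} (hsq : range φ ≤ ker φ)
    {W : Submodule K M} (hW : Disjoint (ker φ) W) :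
    Function.Injective (W.subtype.coprod (φ ∘ₗ W.subtype)) := by
  have hinjOn : ∀ x : W, φ x = 0 → x = 0 := fun x hx =>
    Subtype.ext (hW.le_bot ⟨hx, x.2⟩)
  rw [← ker_eq_bot, ker_eq_bot']
  rintro ⟨x, y⟩ hxy
  simp only [coprod_apply, Submodule.subtype_apply, comp_apply] at hxy
  have hx : x = 0 := hinjOn x <| by
    simpa [mem_ker.mp (hsq (mem_range_self φ y))] using congrArg φ hxy
  have hy : y = 0 := hinjOn y <| by simpa [hx] using hxy
  simp [hx, hy]

theorem surjective_coprod_subtype_comp_of_codisjoint_ker {φ : M →ₗ[K] M}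
    (hker : ker φ ≤ range φ) {W : Submodule K M} (hW : Codisjoint (ker φ) W) :
    Function.Surjective (W.subtype.coprod (φ ∘ₗ W.subtype)) := by
  have hrange : range φ = W.map φ := by
    rw [range_eq_map, ← hW.eq_top, Submodule.map_sup, le_ker_iff_map.mp le_rfl, bot_sup_eq]
  rw [← range_eq_top, range_coprod, Submodule.range_subtype, range_comp,
    Submodule.range_subtype, eq_top_iff, ← hrange, sup_comm W, ← hW.eq_top]
  exact sup_le_sup_right hker W

theorem exists_basis_prod_bool_of_range_eq_ker (φ : M →ₗ[K] M) (h : range φ = ker φ) :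
    ∃ (α : Type u) (g : α → M) (B : Module.Basis (α × Bool) K M),
      ∀ i, B (i, false) = g i ∧ B (i, true) = φ (g i) := by
  obtain ⟨W, hW⟩ := (ker φ).exists_isCompl
  let e := LinearEquiv.ofBijective _
    ⟨injective_coprod_subtype_comp_of_disjoint_ker h.le hW.disjoint,
      surjective_coprod_subtype_comp_of_codisjoint_ker h.ge hW.codisjoint⟩
  let b := Module.Basis.ofVectorSpace K W
  refine ⟨_, fun i => b i, ((b.prod b).map e).reindex
    ((Equiv.prodComm _ Bool).trans (Equiv.boolProdEquivSum _)).symm, fun i => ⟨?_, ?_⟩⟩ <;>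
    simp only [Module.Basis.reindex_apply, Module.Basis.map_apply] <;>
    exact (LinearEquiv.ofBijective_apply _ _).trans (by simp)

end LinearMap

theorem stmt2_general (K : Type) [Field K] (V : Type) [AddCommGroup V] [Module K V]
    (M : Type) [AddCommGroup M] [Module (ExteriorAlgebra K V) M]
    [Module K M] [IsScalarTower K (ExteriorAlgebra K V) M]
    (f : V)
    (hreg : ∀ m : M, ExteriorAlgebra.ι K f • m = 0 ↔
      ∃ m', m = ExteriorAlgebra.ι K f • m') :
    ∃ (α : Type) (g : α → M) (B : Module.Basis (α × Bool) K M),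
      ∀ i : α, B (i, false) = g i ∧
        B (i, true) = ExteriorAlgebra.ι K f • g i := by
  let φ := DistribSMul.toLinearMap K M (ExteriorAlgebra.ι K f)
  have hφ : LinearMap.range φ = LinearMap.ker φ := by
    refine le_antisymm ?_ fun m hm => ((hreg m).mp hm).imp fun m' h => h.symm
    rintro _ ⟨m, rfl⟩
    show ExteriorAlgebra.ι K f • ExteriorAlgebra.ι K f • m = 0
    rw [smul_smul, ExteriorAlgebra.ι_sq_zero, zero_smul]
  exact LinearMap.exists_basis_prod_bool_of_range_eq_ker φ hφ

/-- If `M = E/I` is a cyclic module over the exterior algebra `E = Λ(V)` and `f ∈ E₁` is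
regular on `M` (the kernel of multiplication by `f` on `M` equals `f·M`), then `M` is a
free module over the subalgebra `K⟨f⟩ = K[f]/(f²)`: there is a `K`-basis of `M` of the
form `{gᵢ, f·gᵢ}`. -/
theorem stmt2 (K : Type) [Field K] (V : Type) [AddCommGroup V] [Module K V]
    [FiniteDimensional K V]
    (M : Type) [AddCommGroup M] [Module (ExteriorAlgebra K V) M]
    [Module K M] [IsScalarTower K (ExteriorAlgebra K V) M]
    (hcyc : ∃ m₀ : M, ∀ x : M, ∃ r : ExteriorAlgebra K V, x = r • m₀)
    (f : V)
    (hreg : ∀ m : M, ExteriorAlgebra.ι K f • m = 0 ↔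
      ∃ m', m = ExteriorAlgebra.ι K f • m') :
    ∃ (α : Type) (g : α → M) (B : Module.Basis (α × Bool) K M),
      ∀ i : α, B (i, false) = g i ∧
        B (i, true) = ExteriorAlgebra.ι K f • g i :=
  stmt2_general K V M f hreg
end

section
/- Let E = K⟨a,b,c,d⟩ be the exterior algebra on four generators over a field K, and let I = (a∧b + c∧d, a∧c, b∧c). Then d is a regular element on E/I, i.e., the annihilator of d in E/I equals d·(E/I), and the image of I in E/(d) ≅ K⟨a,b,c⟩ is the square m² of the maximal ideal m = (a,b,c). -/
/-!
Let `J = I + (d) = (ab, ac, bc, d)`. Since `J` contains every product of two generators, every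
`x` is congruent modulo `J` to `r + v` with `r` a scalar and `v` linear. Contracting with dual
vectors gives functionals (the degree-one coefficient of `d` and the degree-two coefficients
against `a∧d`, `b∧d`, `a∧b - c∧d`) that vanish on `I`, because together with the components in
degrees `0` and `1` they cut out a submodule stable under left multiplication by generators.
Evaluated on `d (r + v)` they return `r`, `-v₀`, `-v₁`, `v₂`; so if `d x ∈ I` then `r + v` is a
multiple of `d` and `x ∈ J`. Finally `x d = d (involute x)`, so `J = I + dE`.
-/

namespace CliffordAlgebra

variable {R M : Type*} [CommRing R] [AddCommGroup M] [Module R M] {Q : QuadraticForm R M}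

theorem mem_of_mem_span_of_ι_mul_mem {S : Set (CliffordAlgebra Q)}
    {N : Submodule R (CliffordAlgebra Q)} (hS : S ⊆ N) (hN : ∀ m, ∀ z ∈ N, ι Q m * z ∈ N)
    {z : CliffordAlgebra Q} (hz : z ∈ Ideal.span S) : z ∈ N := by
  induction hz using Submodule.span_induction with
  | mem z hz => exact hS hz
  | zero => exact N.zero_mem
  | add _ _ _ _ hx hy => exact N.add_mem hx hy
  | smul x z _ hz =>
    induction x using left_induction with
    | algebraMap r => simpa only [smul_eq_mul, ← Algebra.smul_def] using N.smul_mem r hz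
    | add x y hx hy => rw [add_smul]; exact N.add_mem hx hy
    | ι_mul x m hx => rw [smul_eq_mul, mul_assoc]; exact hN m _ hx

theorem exists_sub_algebraMap_add_ι_mem (J : Ideal (CliffordAlgebra Q))
    (hJ : ∀ u v, ι Q u * ι Q v ∈ J) (x : CliffordAlgebra Q) :
    ∃ (r : R) (v : M), x - (algebraMap R _ r + ι Q v) ∈ J := by
  induction x using left_induction with
  | algebraMap r => exact ⟨r, 0, by simp⟩
  | add x y hx hy =>
    obtain ⟨r, v, hx⟩ := hx
    obtain ⟨s, w, hy⟩ := hy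
    refine ⟨r + s, v + w, ?_⟩
    convert J.add_mem hx hy using 1
    simp only [map_add]
    abel
  | ι_mul x m hx =>
    obtain ⟨r, v, hx⟩ := hx
    refine ⟨0, r • m, ?_⟩
    convert J.add_mem (J.mul_mem_left (ι Q m) hx) (hJ m v) using 1
    simp only [map_zero, zero_add, map_smul, mul_sub, mul_add, Algebra.smul_def, Algebra.commutes]
    abel

end CliffordAlgebra

namespace ExteriorAlgebra

open CliffordAlgebra

variable {R M : Type*} [CommRing R] [AddCommGroup M] [Module R M]

theorem mul_ι_eq_ι_mul_involute (x : ExteriorAlgebra R M) (m : M) :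
    x * ι R m = ι R m * involute x := by
  induction x using left_induction with
  | algebraMap r => rw [AlgHom.commutes, Algebra.commutes]
  | add x y hx hy => rw [add_mul, hx, hy, map_add, mul_add]
  | ι_mul x u hx =>
    rw [mul_assoc, hx, map_mul, involute_ι, ← mul_assoc, ← mul_assoc, mul_neg,
      ← eq_neg_of_add_eq_zero_left (ι_add_mul_swap u m)]

theorem mem_span_singleton_ι {m : M} {y : ExteriorAlgebra R M} :
    y ∈ Ideal.span {ι R m} ↔ ∃ z, ι R m * z = y := by
  rw [Ideal.mem_span_singleton']
  constructor
  · rintro ⟨z, rfl⟩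
    exact ⟨involute z, (mul_ι_eq_ι_mul_involute z m).symm⟩
  · rintro ⟨z, rfl⟩
    exact ⟨involute z, by rw [mul_ι_eq_ι_mul_involute, involute_involute]⟩

theorem mem_sup_span_singleton_ι {I : Ideal (ExteriorAlgebra R M)} {m : M}
    {x : ExteriorAlgebra R M} : x ∈ I ⊔ Ideal.span {ι R m} ↔ ∃ y, x - ι R m * y ∈ I := by
  simp only [Submodule.mem_sup, mem_span_singleton_ι]
  constructor
  · rintro ⟨i, hi, _, ⟨y, rfl⟩, rfl⟩
    exact ⟨y, by simpa using hi⟩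
  · rintro ⟨y, hy⟩
    exact ⟨_, hy, _, ⟨y, rfl⟩, sub_add_cancel x _⟩

theorem ι_mul_mem_of_mem_sup_span_singleton_ι {I : Ideal (ExteriorAlgebra R M)} {m : M}
    {x : ExteriorAlgebra R M} (hx : x ∈ I ⊔ Ideal.span {ι R m}) : ι R m * x ∈ I := by
  obtain ⟨y, hy⟩ := mem_sup_span_singleton_ι.1 hx
  have h : ι R m * x = ι R m * (x - ι R m * y) := by
    rw [mul_sub, ← mul_assoc, ι_sq_zero, zero_mul, sub_zero]
  exact h ▸ I.mul_mem_left _ hy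

theorem ι_mul_ι_mem_of_basis {κ : Type*} [LinearOrder κ] (b : Module.Basis κ R M)
    (J : Ideal (ExteriorAlgebra R M)) (hJ : ∀ i j, i < j → ι R (b i) * ι R (b j) ∈ J)
    (u v : M) : ι R u * ι R v ∈ J := by
  let B := (LinearMap.mul R (ExteriorAlgebra R M)).compl₁₂ (ι R) (ι R)
  have hB : Submodule.map₂ B (Submodule.span R (Set.range b)) (Submodule.span R (Set.range b))
      ≤ J.restrictScalars R := by
    rw [Submodule.map₂_span_span, Submodule.span_le]
    rintro _ ⟨_, ⟨i, rfl⟩, _, ⟨j, rfl⟩, rfl⟩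
    rcases lt_trichotomy i j with h | rfl | h
    · exact hJ i j h
    · simp [B]
    · simpa [B, eq_neg_of_add_eq_zero_left (ι_add_mul_swap (b i) (b j))] using hJ j i h
  exact hB (Submodule.apply_mem_map₂ B (b.span_eq ▸ Submodule.mem_top)
    (b.span_eq ▸ Submodule.mem_top))

@[simp]
theorem algebraMapInv_ι (m : M) : algebraMapInv (ι R m) = 0 := by
  simp [algebraMapInv]

/-- `coeffOne f` and `coeffTwo f g` pair the components of degree one and two with `f` and
`f ∧ g` respectively. -/
def coeffOne (f : Module.Dual R M) : ExteriorAlgebra R M →ₗ[R] R :=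
  algebraMapInv.toLinearMap ∘ₗ contractLeft f

def coeffTwo (f g : Module.Dual R M) : ExteriorAlgebra R M →ₗ[R] R :=
  coeffOne g ∘ₗ contractLeft f

@[simp]
theorem coeffOne_algebraMap (f : Module.Dual R M) (r : R) :
    coeffOne f (algebraMap R (ExteriorAlgebra R M) r) = 0 := by
  simp [coeffOne]

@[simp]
theorem coeffOne_ι (f : Module.Dual R M) (v : M) : coeffOne f (ι R v) = f v := by
  simp [coeffOne]

theorem coeffOne_ι_mul (f : Module.Dual R M) (m : M) (z : ExteriorAlgebra R M) :
    coeffOne f (ι R m * z) = f m * algebraMapInv z := by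
  simp [coeffOne, contractLeft_ι_mul]

theorem coeffTwo_ι_mul (f g : Module.Dual R M) (m : M) (z : ExteriorAlgebra R M) :
    coeffTwo f g (ι R m * z) = f m * coeffOne g z - g m * coeffOne f z := by
  simp [coeffTwo, contractLeft_ι_mul, coeffOne]

def orderAtLeastTwo : Submodule R (ExteriorAlgebra R M) :=
  LinearMap.ker (algebraMapInv : ExteriorAlgebra R M →ₐ[R] R).toLinearMap ⊓
    ⨅ f : Module.Dual R M, LinearMap.ker (coeffOne f)

theorem mem_orderAtLeastTwo {z : ExteriorAlgebra R M} :
    z ∈ orderAtLeastTwo ↔ algebraMapInv z = 0 ∧ ∀ f : Module.Dual R M, coeffOne f z = 0 := by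
  simp [orderAtLeastTwo]

theorem ι_mul_mem_orderAtLeastTwo (m : M) {z : ExteriorAlgebra R M} (hz : algebraMapInv z = 0) :
    ι R m * z ∈ orderAtLeastTwo := by
  simp [mem_orderAtLeastTwo, coeffOne_ι_mul, hz]

end ExteriorAlgebra

section FourGenerators

open ExteriorAlgebra

variable (R : Type*) [CommRing R]

local notation "𝔢" i:max => ExteriorAlgebra.ι R (Pi.single i 1 : Fin 4 → R)
local notation "𝓘" => Ideal.span {𝔢 0 * 𝔢 1 + 𝔢 2 * 𝔢 3, 𝔢 0 * 𝔢 2, 𝔢 1 * 𝔢 2}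

/-- The forms `a∧d`, `b∧d` and `a∧b - c∧d` span the annihilator of the degree-two part of `I`. -/
def relationSpace : Submodule R (ExteriorAlgebra R (Fin 4 → R)) :=
  orderAtLeastTwo ⊓ LinearMap.ker (coeffTwo (.proj 0) (.proj 3)) ⊓
    LinearMap.ker (coeffTwo (.proj 1) (.proj 3)) ⊓
    LinearMap.ker (coeffTwo (.proj 0) (.proj 1) - coeffTwo (.proj 2) (.proj 3))

theorem ι_mul_mem_relationSpace (m : Fin 4 → R) {z : ExteriorAlgebra R (Fin 4 → R)}
    (hz : z ∈ relationSpace R) : ι R m * z ∈ relationSpace R := by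
  obtain ⟨⟨⟨hz, -⟩, -⟩, -⟩ := hz
  obtain ⟨h0, h1⟩ := mem_orderAtLeastTwo.1 hz
  simp [relationSpace, ι_mul_mem_orderAtLeastTwo, coeffTwo_ι_mul, h0, h1]

theorem mem_relationSpace_of_mem {z : ExteriorAlgebra R (Fin 4 → R)} (hz : z ∈ 𝓘) :
    z ∈ relationSpace R := by
  refine CliffordAlgebra.mem_of_mem_span_of_ι_mul_mem ?_ (ι_mul_mem_relationSpace R) hz
  simp [Set.insert_subset_iff, relationSpace, coeffTwo_ι_mul, ι_mul_mem_orderAtLeastTwo, add_mem]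

theorem eq_smul_of_ι_three_mul_mem {r : R} {v : Fin 4 → R}
    (h : 𝔢 3 * (algebraMap R _ r + ι R v) ∈ 𝓘) : algebraMap R _ r + ι R v = v 3 • 𝔢 3 := by
  obtain ⟨⟨⟨h2, had⟩, hbd⟩, habcd⟩ := mem_relationSpace_of_mem R h
  have hr : r = 0 := by simpa [coeffOne_ι_mul] using (mem_orderAtLeastTwo.1 h2).2 (.proj 3)
  have hv0 : v 0 = 0 := by simpa [coeffTwo_ι_mul] using had
  have hv1 : v 1 = 0 := by simpa [coeffTwo_ι_mul] using hbd
  have hv2 : v 2 = 0 := by simpa [coeffTwo_ι_mul] using habcd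
  have hv : v = v 3 • (Pi.single 3 1 : Fin 4 → R) := by
    funext i
    fin_cases i <;> simp [hv0, hv1, hv2]
  rw [hr, hv]
  simp

theorem sup_span_ι_three :
    𝓘 ⊔ Ideal.span {𝔢 3} = Ideal.span {𝔢 0 * 𝔢 1, 𝔢 0 * 𝔢 2, 𝔢 1 * 𝔢 2, 𝔢 3} := by
  apply le_antisymm
  · have hd : 𝔢 3 ∈ Ideal.span {𝔢 0 * 𝔢 1, 𝔢 0 * 𝔢 2, 𝔢 1 * 𝔢 2, 𝔢 3} :=
      Ideal.subset_span (by simp)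
    refine sup_le (Ideal.span_le.2 ?_) (Ideal.span_le.2 (by simpa using hd))
    simp only [Set.insert_subset_iff, Set.singleton_subset_iff, SetLike.mem_coe]
    exact ⟨add_mem (Ideal.subset_span (by simp)) (Ideal.mul_mem_left _ _ hd),
      Ideal.subset_span (by simp), Ideal.subset_span (by simp)⟩
  · have hI : 𝓘 ≤ 𝓘 ⊔ Ideal.span {𝔢 3} := le_sup_left
    have hd : 𝔢 3 ∈ 𝓘 ⊔ Ideal.span {𝔢 3} := Ideal.mem_sup_right (Ideal.mem_span_singleton_self _)
    have hab : 𝔢 0 * 𝔢 1 + 𝔢 2 * 𝔢 3 ∈ 𝓘 := Ideal.subset_span (by simp)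
    simp only [Ideal.span_le, Set.insert_subset_iff, Set.singleton_subset_iff, SetLike.mem_coe]
    exact ⟨by simpa using sub_mem (hI hab) (Ideal.mul_mem_left _ (𝔢 2) hd),
      hI (Ideal.subset_span (by simp)), hI (Ideal.subset_span (by simp)), hd⟩

theorem ι_mul_ι_mem_sup_span_ι_three (u v : Fin 4 → R) :
    ι R u * ι R v ∈ 𝓘 ⊔ Ideal.span {𝔢 3} := by
  rw [sup_span_ι_three]
  refine ι_mul_ι_mem_of_basis (Pi.basisFun R (Fin 4)) _ (fun i j hij => ?_) u v
  simp only [Pi.basisFun_apply]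
  fin_cases i <;> fin_cases j <;> first
    | exact absurd hij (by decide)
    | (apply Ideal.subset_span; simp; done)
    | (apply Ideal.mul_mem_left; apply Ideal.subset_span; simp)

theorem mem_sup_span_of_ι_three_mul_mem {x : ExteriorAlgebra R (Fin 4 → R)} (h : 𝔢 3 * x ∈ 𝓘) :
    x ∈ 𝓘 ⊔ Ideal.span {𝔢 3} := by
  obtain ⟨r, v, hx⟩ :=
    CliffordAlgebra.exists_sub_algebraMap_add_ι_mem _ (ι_mul_ι_mem_sup_span_ι_three R) x
  have hdl : 𝔢 3 * (algebraMap R _ r + ι R v) ∈ 𝓘 := by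
    simpa [mul_sub] using sub_mem h (ι_mul_mem_of_mem_sup_span_singleton_ι hx)
  have hl : algebraMap R _ r + ι R v ∈ 𝓘 ⊔ Ideal.span {𝔢 3} := by
    rw [eq_smul_of_ι_three_mul_mem R hdl]
    exact Ideal.mem_sup_right (Submodule.smul_of_tower_mem _ _ (Ideal.mem_span_singleton_self _))
  simpa using add_mem hx hl

end FourGenerators

/-- In the exterior algebra `E = K⟨a,b,c,d⟩` on four generators, with
`I = (a∧b + c∧d, a∧c, b∧c)`: the element `d` is regular on `E/I` (the annihilator of
`d` in `E/I` equals `d·(E/I)`), and the image of `I` in `E/(d) ≅ K⟨a,b,c⟩` is the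
square `m² = (ab, ac, bc)` of the maximal ideal `m = (a,b,c)` (expressed inside `E` as
`I + (d) = (ab, ac, bc, d)`). -/
theorem stmt8 (K : Type*) [Field K] :
    let E := ExteriorAlgebra K (Fin 4 → K)
    let a : E := ExteriorAlgebra.ι K (Pi.single 0 1)
    let b : E := ExteriorAlgebra.ι K (Pi.single 1 1)
    let c : E := ExteriorAlgebra.ι K (Pi.single 2 1)
    let d : E := ExteriorAlgebra.ι K (Pi.single 3 1)
    let I : Ideal E := Ideal.span {a * b + c * d, a * c, b * c}
    (∀ x : E, d * x ∈ I ↔ ∃ y : E, x - d * y ∈ I) ∧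
    I ⊔ Ideal.span {d} = Ideal.span {a * b, a * c, b * c, d} := by
  intro E a b c d I
  refine ⟨fun x => ?_, sup_span_ι_three K⟩
  rw [← ExteriorAlgebra.mem_sup_span_singleton_ι]
  exact ⟨mem_sup_span_of_ι_three_mul_mem K, ExteriorAlgebra.ι_mul_mem_of_mem_sup_span_singleton_ι⟩
end

section
/- In the exterior algebra E = K⟨a,b,c,d⟩ (char K ≠ 2), the element a∧b + c∧d has rank 4 (as a skew-symmetric bilinear form / 4×4 alternating matrix), whereas every degree-2 element of an exterior algebra on a 3-dimensional space of linear forms has rank at most 2. Consequently the ideal (a∧b+c∧d, a∧c, b∧c) is not the square of the maximal ideal of any exterior subalgebra generated by 3 linear forms of E. -/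
/-!
A product `ι x * ι y` of two vectors is even, hence central in the exterior algebra, so the left
ideal generated by such products with `x, y` in a 3-dimensional `W` squares to zero: a product of
two generators is a wedge of four vectors of `W`, which are linearly dependent. On the other
hand `ω = a∧b + c∧d` has `ω * ω = 2 • a∧b∧c∧d`, which the determinant, read as a functional on
the top degree, shows to be nonzero when `2 ≠ 0`. For the matrices: a skew-symmetric matrix of
odd size has `det A = det Aᵀ = -det A`.
-/

open ExteriorAlgebra Module

theorem Matrix.det_eq_zero_of_transpose_eq_neg {n R : Type*} [Fintype n] [DecidableEq n]
    [CommRing R] [NoZeroDivisors R] (h2 : (2 : R) ≠ 0) (hn : Odd (Fintype.card n))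
    {A : Matrix n n R} (hA : A.transpose = -A) : A.det = 0 := by
  have h : A.det = -A.det :=
    calc A.det = A.transpose.det := A.det_transpose.symm
    _ = -A.det := by rw [hA, Matrix.det_neg, hn.neg_one_pow, neg_one_mul]
  exact (mul_eq_zero.mp (by linear_combination h : (2 : R) * A.det = 0)).resolve_left h2

theorem Matrix.rank_lt_card_of_det_eq_zero {n K : Type*} [Fintype n] [DecidableEq n] [Field K]
    {A : Matrix n n K} (h : A.det = 0) : A.rank < Fintype.card n := by
  obtain ⟨v, hv, hAv⟩ := Matrix.exists_mulVec_eq_zero_iff.mpr h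
  have hker : 0 < finrank K (LinearMap.ker A.mulVecLin) :=
    Module.finrank_pos_iff_exists_ne_zero.mpr ⟨⟨v, hAv⟩, by simpa [Subtype.ext_iff] using hv⟩
  have := A.mulVecLin.finrank_range_add_finrank_ker
  rw [Module.finrank_fintype_fun_eq_card] at this
  rw [Matrix.rank]
  omega

theorem Ideal.mul_eq_zero_of_mem_span {R : Type*} [Semiring R] {S : Set R}
    (hS : ∀ s ∈ S, ∀ r, Commute s r) (hSS : ∀ s ∈ S, ∀ t ∈ S, s * t = 0) {x y : R}
    (hx : x ∈ Ideal.span S) (hy : y ∈ Ideal.span S) : x * y = 0 := by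
  induction hx using Submodule.span_induction with
  | mem s hs =>
    induction hy using Submodule.span_induction with
    | mem t ht => exact hSS s hs t ht
    | zero => exact mul_zero s
    | add y z _ _ hy hz => rw [mul_add, hy, hz, add_zero]
    | smul r y _ hy => rw [smul_eq_mul, ← mul_assoc, (hS s hs r).eq, mul_assoc, hy, mul_zero]
  | zero => exact zero_mul y
  | add x z _ _ hx hz => rw [add_mul, hx, hz, add_zero]
  | smul r x _ hx => rw [smul_eq_mul, mul_assoc, hx, mul_zero]

namespace ExteriorAlgebra

section CommRing

variable {R M : Type*} [CommRing R] [AddCommGroup M] [Module R M]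

theorem commute_ι_mul_ι (x y : M) (z : ExteriorAlgebra R M) : Commute (ι R x * ι R y) z := by
  induction z using ExteriorAlgebra.induction with
  | algebraMap r => exact Algebra.commutes r _ |>.symm
  | ι z =>
    have hx := ι_add_mul_swap (R := R) x z
    have hy := ι_add_mul_swap (R := R) y z
    simp only [Commute, SemiconjBy, mul_assoc, eq_neg_of_add_eq_zero_left hy]
    simp only [← mul_assoc, eq_neg_of_add_eq_zero_left hx, neg_mul, mul_neg, neg_neg]
  | mul a b ha hb => exact ha.mul_right hb
  | add a b ha hb => exact ha.add_right hb

theorem ι_mul_ι_mul_self (x y : M) : ι R x * ι R y * (ι R x * ι R y) = 0 := by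
  rw [← mul_assoc, (commute_ι_mul_ι x y (ι R x)).eq, ← mul_assoc, ι_sq_zero, zero_mul, zero_mul]

theorem ι_mul_ι_mul_ι_mul_ι (a b c d : M) :
    ι R a * ι R b * (ι R c * ι R d) = ιMulti R 4 ![a, b, c, d] := by
  simp [ιMulti_apply, mul_assoc]

theorem ι_mul_ι_add_ι_mul_ι_mul_self (a b c d : M) :
    (ι R a * ι R b + ι R c * ι R d) * (ι R a * ι R b + ι R c * ι R d) =
      (2 : R) • ιMulti R 4 ![a, b, c, d] := by
  rw [add_mul, mul_add, mul_add, ι_mul_ι_mul_self, ι_mul_ι_mul_self,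
    (commute_ι_mul_ι c d (ι R a * ι R b)).eq, ι_mul_ι_mul_ι_mul_ι, zero_add, add_zero, two_smul]

end CommRing

theorem ιMulti_single_ne_zero {R : Type*} [CommRing R] [Nontrivial R] (n : ℕ) :
    ιMulti R n (fun i : Fin n => Pi.single i (1 : R)) ≠ 0 := by
  intro h
  have := congrArg (liftAlternating (Pi.single n Matrix.detRowAlternating)) h
  rw [liftAlternating_apply_ιMulti, Pi.single_eq_same, map_zero] at this
  have hone : (Matrix.of fun i : Fin n => Pi.single i (1 : R)) = 1 := by
    ext i j
    simp [Matrix.one_apply, Pi.single_apply, eq_comm]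
  change (Matrix.of fun i : Fin n => Pi.single i (1 : R)).det = 0 at this
  rw [hone, Matrix.det_one] at this
  exact one_ne_zero this

section Field

variable {K M : Type*} [Field K] [AddCommGroup M] [Module K M]

theorem ιMulti_eq_zero_of_finrank_lt (W : Submodule K M) [FiniteDimensional K W] {n : ℕ}
    (hW : finrank K W < n) {v : Fin n → M} (hv : ∀ i, v i ∈ W) : ιMulti K n v = 0 := by
  refine (ιMulti K n).map_linearDependent v fun hli => ?_
  have hspan : Submodule.span K (Set.range v) ≤ W :=
    Submodule.span_le.mpr (Set.range_subset_iff.mpr hv)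
  have := linearIndependent_iff_card_le_finrank_span.mp hli
  rw [Fintype.card_fin, Set.finrank] at this
  exact absurd (this.trans (Submodule.finrank_mono hspan)) hW.not_ge

theorem mul_self_eq_zero_of_mem_span_ι_mul_ι (W : Submodule K M) [FiniteDimensional K W]
    (hW : finrank K W < 4) {ω : ExteriorAlgebra K M}
    (hω : ω ∈ Ideal.span {z | ∃ x ∈ W, ∃ y ∈ W, z = ι K x * ι K y}) : ω * ω = 0 := by
  refine Ideal.mul_eq_zero_of_mem_span ?_ ?_ hω hω
  · rintro - ⟨x, -, y, -, rfl⟩ r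
    exact commute_ι_mul_ι x y r
  · rintro - ⟨a, ha, b, hb, rfl⟩ - ⟨c, hc, d, hd, rfl⟩
    rw [ι_mul_ι_mul_ι_mul_ι]
    exact ιMulti_eq_zero_of_finrank_lt W hW fun i => by fin_cases i <;> assumption

end Field

end ExteriorAlgebra

/-- In `E = K⟨a,b,c,d⟩` with `char K ≠ 2`: the element `a∧b + c∧d` corresponds to a
`4×4` alternating matrix of rank `4`, whereas every degree-2 element of an exterior
algebra on a 3-dimensional space of linear forms corresponds to an alternating matrix
of rank at most `2` (stated here: every `3×3` alternating matrix has rank ≤ 2).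
Consequently the ideal `(a∧b + c∧d, a∧c, b∧c)` is not the square of the maximal ideal of
any exterior subalgebra generated by 3 linear forms of `E`. -/
theorem stmt9 (K : Type*) [Field K] (hchar : (2 : K) ≠ 0) :
    (!![0, 1, 0, 0; -1, 0, 0, 0; 0, 0, 0, 1; 0, 0, -1, 0] : Matrix (Fin 4) (Fin 4) K).rank = 4 ∧
    (∀ C : Matrix (Fin 3) (Fin 3) K, C.transpose = -C → (∀ i, C i i = 0) → C.rank ≤ 2) ∧
    ¬ ∃ W : Submodule K (Fin 4 → K), Module.finrank K W = 3 ∧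
      Ideal.span {ExteriorAlgebra.ι K (Pi.single 0 (1:K)) * ExteriorAlgebra.ι K (Pi.single 1 1)
          + ExteriorAlgebra.ι K (Pi.single 2 1) * ExteriorAlgebra.ι K (Pi.single 3 1),
        ExteriorAlgebra.ι K (Pi.single 0 1) * ExteriorAlgebra.ι K (Pi.single 2 1),
        ExteriorAlgebra.ι K (Pi.single 1 1) * ExteriorAlgebra.ι K (Pi.single 2 1)}
      = Ideal.span {z : ExteriorAlgebra K (Fin 4 → K) |
          ∃ x ∈ W, ∃ y ∈ W, z = ExteriorAlgebra.ι K x * ExteriorAlgebra.ι K y} := by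
  refine ⟨?_, fun C hC _ => ?_, ?_⟩
  · refine (Matrix.rank_of_det_ne_zero ?_).trans (Fintype.card_fin 4)
    simp [Matrix.det_succ_row_zero, Fin.sum_univ_succ, Fin.succAbove]
  · have := Matrix.rank_lt_card_of_det_eq_zero
      (Matrix.det_eq_zero_of_transpose_eq_neg hchar (by decide) hC)
    rw [Fintype.card_fin] at this
    omega
  · rintro ⟨W, hW, hspan⟩
    have hω := mul_self_eq_zero_of_mem_span_ι_mul_ι W (by omega)
      (hspan ▸ Ideal.subset_span (Set.mem_insert _ _))
    rw [ι_mul_ι_add_ι_mul_ι_mul_self] at hω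
    have hbasis : (![Pi.single 0 1, Pi.single 1 1, Pi.single 2 1, Pi.single 3 1] :
        Fin 4 → Fin 4 → K) = fun i => Pi.single i 1 := by
      ext i : 1
      fin_cases i <;> rfl
    rw [hbasis] at hω
    exact smul_ne_zero hchar (ιMulti_single_ne_zero 4) hω
end

section
/- Let E be the exterior algebra on an n-dimensional vector space over a field K, with maximal graded ideal m. Then the annihilator of the power m^ℓ in E is m^{n-ℓ+1}, for 1 ≤ ℓ ≤ n. -/
/-!
Every monomial `ιMulti u` of positive degree starts with a factor `ι (u 0)`, so `x * ι v` lies in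
`m = ι(V) · E` for every `x`; hence `m` is two-sided and `m^k = Λ^k V · E = Λ^{≥k} V` for `k ≥ 1`.
In particular `m^(n+1) = 0`, so `m^(n-ℓ+1) · m^ℓ = 0`.

Conversely, expand `x = ∑ c_S e_S` in the monomial basis attached to a basis of `V`.
For `T ≠ S` the product `e_T e_{Sᶜ}` is either zero or `± e_{T ∪ Sᶜ}` with `T ∪ Sᶜ ≠ univ`,
while `e_S e_{Sᶜ} = ± e_univ`; so the top coefficient of `x e_{Sᶜ}` is `± c_S`.
If `|S| ≤ n - ℓ` then `e_{Sᶜ} ∈ m^ℓ`, hence `x e_{Sᶜ} = 0` forces `c_S = 0`, and the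
surviving monomials all lie in `m^(n-ℓ+1)`.
-/

open ExteriorAlgebra Submodule Finset Set.powersetCard

namespace Submodule

variable {R A : Type*} [CommSemiring R] [Semiring A] [Algebra R A]

theorem top_mul_top : (⊤ : Submodule R A) * ⊤ = ⊤ :=
  le_top.antisymm (le_mul_of_one_le_left' fun _ _ => trivial)

theorem pow_le_pow_mul_top (P : Submodule R A) {j k : ℕ} (h : k ≤ j) : P ^ j ≤ P ^ k * ⊤ := by
  rw [← Nat.add_sub_cancel' h, pow_add]
  gcongr
  exact le_top

theorem mul_top_pow {P : Submodule R A} (h : ⊤ * P ≤ P * ⊤) {k : ℕ} (hk : k ≠ 0) :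
    (P * ⊤) ^ k = P ^ k * ⊤ := by
  induction k with
  | zero => contradiction
  | succ k ih =>
    rcases eq_or_ne k 0 with rfl | hk
    · simp
    rw [pow_succ, ih hk, pow_succ]
    apply le_antisymm
    · calc P ^ k * ⊤ * (P * ⊤) = P ^ k * (⊤ * P) * ⊤ := by simp only [mul_assoc]
        _ ≤ P ^ k * (P * ⊤) * ⊤ := by gcongr
        _ = P ^ k * P * ⊤ := by rw [mul_assoc, mul_assoc, top_mul_top, mul_assoc]
    · calc P ^ k * P * ⊤ ≤ P ^ k * ⊤ * P * ⊤ := by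
            gcongr
            exact le_mul_of_one_le_right' fun _ _ => trivial
        _ = P ^ k * ⊤ * (P * ⊤) := by simp only [mul_assoc]

end Submodule

namespace ExteriorAlgebra

variable {R M : Type*} [CommRing R] [AddCommGroup M] [Module R M]

variable (R M) in
def augIdeal : Submodule R (ExteriorAlgebra R M) := LinearMap.range (ι R) * ⊤

theorem mul_ι_mem_augIdeal (x : ExteriorAlgebra R M) (v : M) : x * ι R v ∈ augIdeal R M := by
  have hx : x ∈ span R (Set.range fun p : Σ d, (Fin d → M) => ιMulti R p.1 p.2) :=
    ιMulti_span R M ▸ mem_top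
  induction hx using span_induction with
  | mem _ hy =>
    obtain ⟨⟨_ | d, u⟩, rfl⟩ := hy
    · simpa [augIdeal] using mul_mem_mul (LinearMap.mem_range_self (ι R) v) (mem_top (x := 1))
    · show ιMulti R (d + 1) u * ι R v ∈ _
      rw [ιMulti_succ_apply, mul_assoc]
      exact mul_mem_mul (LinearMap.mem_range_self _ _) mem_top
  | zero => simp
  | add _ _ _ _ hy hz => rw [add_mul]; exact add_mem hy hz
  | smul c _ _ hy => rw [smul_mul_assoc]; exact smul_mem _ c hy

theorem augIdeal_pow {k : ℕ} (hk : k ≠ 0) : augIdeal R M ^ k = ⋀[R]^k M * ⊤ :=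
  mul_top_pow (mul_le.mpr fun x _ _ hv => by
    obtain ⟨v, rfl⟩ := hv
    exact mul_ι_mem_augIdeal x v) hk

section Basis

variable {I : Type*} [LinearOrder I]

theorem basis_mem_exteriorPower (b : Module.Basis I R M) (s : Finset I) :
    b.ExteriorAlgebra s ∈ ⋀[R]^s.card M := by
  rw [basis_apply_ofCard b rfl]
  exact ιMulti_range R _ ⟨_, rfl⟩

theorem basis_mem_augIdeal_pow (b : Module.Basis I R M) {s : Finset I} {k : ℕ} (hk : k ≠ 0)
    (h : k ≤ s.card) : b.ExteriorAlgebra s ∈ augIdeal R M ^ k := by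
  rw [augIdeal_pow hk]
  exact pow_le_pow_mul_top _ h (basis_mem_exteriorPower b s)

theorem exteriorPower_eq_bot_of_card_lt [Fintype I] (b : Module.Basis I R M) {k : ℕ}
    (hk : Fintype.card I < k) : ⋀[R]^k M = ⊥ := by
  have : IsEmpty (Set.powersetCard I k) := Set.isEmpty_coe_sort.mpr
    (Set.powersetCard.eq_empty_iff.mpr (by rwa [Nat.card_eq_fintype_card]))
  have := (b.exteriorPower k).repr.subsingleton
  exact eq_bot_of_subsingleton

theorem augIdeal_pow_eq_bot_of_card_lt [Fintype I] (b : Module.Basis I R M) {k : ℕ}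
    (hk : Fintype.card I < k) : augIdeal R M ^ k = ⊥ := by
  rw [augIdeal_pow (by omega), exteriorPower_eq_bot_of_card_lt b hk, bot_mul]

theorem basis_mul_basis_of_not_disjoint (b : Module.Basis I R M) {s t : Finset I}
    (h : ¬Disjoint s t) : b.ExteriorAlgebra s * b.ExteriorAlgebra t = 0 :=
  basis_mul_of_not_disjoint b (ofCard (s := s) rfl) (ofCard (s := t) rfl) h

theorem exists_basis_mul_basis_of_disjoint (b : Module.Basis I R M) {s t : Finset I}
    (h : Disjoint s t) :
    ∃ u : ℤˣ, b.ExteriorAlgebra s * b.ExteriorAlgebra t = u • b.ExteriorAlgebra (s ∪ t) := by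
  rw [← disjUnion_eq_union s t h]
  exact ⟨_, basis_mul_of_disjoint b (ofCard (s := s) rfl) (ofCard (s := t) rfl) h⟩

theorem exists_coord_univ_mul_basis_compl [Fintype I] (b : Module.Basis I R M) (s : Finset I) :
    ∃ u : ℤˣ, ∀ x, b.ExteriorAlgebra.coord univ (x * b.ExteriorAlgebra sᶜ) =
      u • b.ExteriorAlgebra.coord s x := by
  obtain ⟨u, hu⟩ := exists_basis_mul_basis_of_disjoint b (disjoint_compl_right (a := s))
  refine ⟨u, fun x => LinearMap.congr_fun
    (f := b.ExteriorAlgebra.coord univ ∘ₗ LinearMap.mulRight R (b.ExteriorAlgebra sᶜ))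
    (g := u • b.ExteriorAlgebra.coord s) (b.ExteriorAlgebra.ext fun t => ?_) x⟩
  simp only [LinearMap.comp_apply, LinearMap.mulRight_apply, LinearMap.smul_apply,
    Module.Basis.coord_apply, Module.Basis.repr_self]
  rcases eq_or_ne t s with rfl | hts
  · simp [hu]
  by_cases hd : Disjoint t sᶜ
  · have hne : t ∪ sᶜ ≠ univ := fun h => hts <| (disjoint_compl_right_iff.mp hd).antisymm
      fun a ha => by simpa [ha] using h.ge (mem_univ a)
    obtain ⟨v, hv⟩ := exists_basis_mul_basis_of_disjoint b hd
    simp [hv, hne, hts]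
  · simp [basis_mul_basis_of_not_disjoint b hd, hts]

theorem forall_mul_eq_zero_iff_mem_augIdeal_pow [Fintype I] (b : Module.Basis I R M) {ℓ : ℕ}
    (hℓ : ℓ ≠ 0) (hℓI : ℓ ≤ Fintype.card I) (x : ExteriorAlgebra R M) :
    (∀ y ∈ augIdeal R M ^ ℓ, x * y = 0) ↔ x ∈ augIdeal R M ^ (Fintype.card I - ℓ + 1) := by
  constructor
  · intro hx
    rw [← b.ExteriorAlgebra.sum_repr x]
    refine sum_mem fun s _ => ?_
    by_cases hs : Fintype.card I - ℓ + 1 ≤ s.card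
    · exact smul_mem _ _ (basis_mem_augIdeal_pow b (by omega) hs)
    obtain ⟨u, hu⟩ := exists_coord_univ_mul_basis_compl b s
    have hsc : ℓ ≤ sᶜ.card := by rw [card_compl]; omega
    have hcoord : u • b.ExteriorAlgebra.coord s x = 0 := by
      rw [← hu, hx _ (basis_mem_augIdeal_pow b hℓ hsc), map_zero]
    rw [← Module.Basis.coord_apply, (smul_eq_zero_iff_eq u).mp hcoord, zero_smul]
    exact zero_mem _
  · intro hx y hy
    have hxy := mul_mem_mul hx hy
    rwa [← pow_add, augIdeal_pow_eq_bot_of_card_lt b (by omega), mem_bot] at hxy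

end Basis

end ExteriorAlgebra

/-- In the exterior algebra `E` on an `n`-dimensional vector space, the annihilator
of the power `m^ℓ` of the maximal (augmentation) ideal `m` equals `m^(n-ℓ+1)`,
for `1 ≤ ℓ ≤ n`.  Here `m` is realized as the `K`-submodule `V·E` of elements with
zero constant term, and powers are taken as submodule powers (so `m^ℓ = Λ^{≥ℓ}`). -/
theorem stmt11 (K : Type*) [Field K] (V : Type*) [AddCommGroup V] [Module K V]
    [FiniteDimensional K V] (n ℓ : ℕ) (hn : Module.finrank K V = n)
    (hℓ1 : 1 ≤ ℓ) (hℓn : ℓ ≤ n) :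
    ∀ x : ExteriorAlgebra K V,
      (∀ y ∈ ((LinearMap.range (ExteriorAlgebra.ι K (M := V)) *
          (⊤ : Submodule K (ExteriorAlgebra K V))) ^ ℓ), x * y = 0) ↔
      x ∈ ((LinearMap.range (ExteriorAlgebra.ι K (M := V)) *
          (⊤ : Submodule K (ExteriorAlgebra K V))) ^ (n - ℓ + 1)) := by
  intro x
  have h := forall_mul_eq_zero_iff_mem_augIdeal_pow (Module.finBasisOfFinrankEq K V hn) (ℓ := ℓ)
    (by omega) (by rwa [Fintype.card_fin]) x
  rwa [Fintype.card_fin] at h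
end

section
/- Let S = K[x_1,...,x_n] and let Γ be a set of multidegrees (monomials) closed under taking least common multiples. If M is a Zⁿ-graded S-module admitting a presentation whose generators and relations have multidegrees in Γ, then every free module in a minimal Zⁿ-graded free resolution of M has all its generators in multidegrees in Γ. In particular, if M has a squarefree presentation then all Betti numbers β_{i,a}(M) vanish unless a ∈ {0,1}ⁿ. -/
/-!
Let `F₂ → F₁ → F₀` be consecutive maps of a minimal multigraded free resolution, let `e_c` be a
basis vector of `F₂`, and let `w` be the lcm of the degrees of the basis vectors of `F₁` met by
its image, i.e. the supremum of the degrees of the rows with `B r c ≠ 0`. Homogeneity gives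
`w ≤ deg e_c`. If `w j < (deg e_c) j` for some `j`, every entry of the column is divisible by
`x_j`, so `B e_c = x_j u` with `u ∈ ker A = im B`, say `u = B t`; then `e_c - x_j t` is a cycle,
hence a boundary, and minimality forces its `c`-th coordinate `1 - x_j t_c` into the ideal
`(x₁, …, xₙ)`, which is absurd. So `deg e_c = w`, and the degrees in homological degree `i + 2`
are lcm's of degrees in degree `i + 1`; induction starts from the presentation.
-/

open MvPolynomial Matrix

section Minimal

variable {R : Type*} [CommRing R] {𝔪 : Ideal R}
  {ι₁ ι₂ ι₃ : Type*} [Fintype ι₂] [Fintype ι₃] [DecidableEq ι₂] [DecidableEq ι₃]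
  {B : Matrix ι₁ ι₂ R} {C : Matrix ι₂ ι₃ R}

theorem Matrix.mem_of_mulVec_eq_zero_of_ker_eq_range
    (hBC : LinearMap.ker (Matrix.toLin' B) = LinearMap.range (Matrix.toLin' C))
    (hC : ∀ r c, C r c ∈ 𝔪) {z : ι₂ → R} (hz : B *ᵥ z = 0) (r : ι₂) : z r ∈ 𝔪 := by
  obtain ⟨t, rfl⟩ : z ∈ LinearMap.range (Matrix.toLin' C) := by
    rw [← hBC, LinearMap.mem_ker, Matrix.toLin'_apply, hz]
  exact Ideal.sum_mem _ fun k _ => Ideal.mul_mem_right _ _ (hC r k)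

theorem Matrix.exists_ne_zero_of_ker_eq_range
    (hBC : LinearMap.ker (Matrix.toLin' B) = LinearMap.range (Matrix.toLin' C))
    (h𝔪 : 𝔪 ≠ ⊤) (hC : ∀ r c, C r c ∈ 𝔪) (c : ι₂) : ∃ r, B r c ≠ 0 := by
  by_contra! hcol
  have hz : B *ᵥ Pi.single c 1 = 0 := by
    rw [mulVec_single_one]
    exact funext hcol
  have := mem_of_mulVec_eq_zero_of_ker_eq_range hBC hC hz c
  rw [Pi.single_eq_same] at this
  exact h𝔪 ((Ideal.eq_top_iff_one _).mpr this)

theorem Matrix.not_forall_dvd_of_ker_eq_range {ι₀ : Type*} [Fintype ι₁] [DecidableEq ι₁]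
    {A : Matrix ι₀ ι₁ R}
    (hAB : LinearMap.ker (Matrix.toLin' A) = LinearMap.range (Matrix.toLin' B))
    (hBC : LinearMap.ker (Matrix.toLin' B) = LinearMap.range (Matrix.toLin' C))
    (h𝔪 : 𝔪 ≠ ⊤) (hC : ∀ r c, C r c ∈ 𝔪) {x : R} (hx𝔪 : x ∈ 𝔪) (hx : IsLeftRegular x)
    (c : ι₂) : ¬ ∀ r, x ∣ B r c := by
  intro hdvd
  choose u hu using hdvd
  have hcol : B *ᵥ Pi.single c 1 = x • u := by
    ext r
    rw [mulVec_single_one, col_apply, Pi.smul_apply, smul_eq_mul, hu r]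
  have hxu : Matrix.toLin' B (Pi.single c 1) ∈ LinearMap.ker (Matrix.toLin' A) :=
    hAB ▸ LinearMap.mem_range_self _ _
  rw [LinearMap.mem_ker, Matrix.toLin'_apply, Matrix.toLin'_apply, hcol, mulVec_smul]
    at hxu
  obtain ⟨t, ht⟩ : u ∈ LinearMap.range (Matrix.toLin' B) := by
    rw [← hAB, LinearMap.mem_ker, Matrix.toLin'_apply]
    funext p
    exact hx (by simpa using congrFun hxu p)
  rw [Matrix.toLin'_apply] at ht
  have hcycle : B *ᵥ (Pi.single c 1 - x • t) = 0 := by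
    rw [mulVec_sub, hcol, mulVec_smul, ht, sub_self]
  have := mem_of_mulVec_eq_zero_of_ker_eq_range hBC hC hcycle c
  rw [Pi.sub_apply, Pi.single_eq_same, Pi.smul_apply, smul_eq_mul] at this
  have hone := Ideal.add_mem _ this (Ideal.mul_mem_right (t c) _ hx𝔪)
  rw [sub_add_cancel] at hone
  exact h𝔪 ((Ideal.eq_top_iff_one _).mpr hone)

end Minimal

theorem MvPolynomial.X_dvd_of_forall_mem_support {R σ : Type*} [CommSemiring R] {j : σ}
    {p : MvPolynomial σ R} (h : ∀ m ∈ p.support, m j ≠ 0) : X j ∣ p := by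
  rw [p.as_sum]
  exact Finset.dvd_sum fun m hm => X_dvd_monomial.mpr (Or.inr (h m hm))

section Multigraded

variable {K σ ι₁ ι₂ : Type*} [CommRing K] {d₁ : ι₁ → σ →₀ ℕ} {d₂ : ι₂ → σ →₀ ℕ}
  {B : Matrix ι₁ ι₂ (MvPolynomial σ K)}

theorem Matrix.le_of_ne_zero_of_homogeneous
    (hB : ∀ r c, ∀ m ∈ (B r c).support, d₁ r + m = d₂ c) {r : ι₁} {c : ι₂} (h : B r c ≠ 0) :
    d₁ r ≤ d₂ c := by
  obtain ⟨m, hm⟩ := support_nonempty.mpr h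
  rw [← hB r c m hm]
  exact le_self_add

theorem Matrix.X_dvd_of_homogeneous_of_lt
    (hB : ∀ r c, ∀ m ∈ (B r c).support, d₁ r + m = d₂ c) {r : ι₁} {c : ι₂} {j : σ}
    (h : d₁ r j < d₂ c j) : X j ∣ B r c :=
  X_dvd_of_forall_mem_support fun m hm => by
    have := DFunLike.congr_fun (hB r c m hm) j
    rw [Finsupp.add_apply] at this
    omega

open Classical in
theorem Matrix.eq_sup_of_homogeneous_of_ker_eq_range [Nontrivial K]
    {ι₀ ι₃ : Type*} [Fintype ι₁] [Fintype ι₂] [Fintype ι₃] [DecidableEq ι₁] [DecidableEq ι₂]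
    [DecidableEq ι₃] {A : Matrix ι₀ ι₁ (MvPolynomial σ K)}
    {C : Matrix ι₂ ι₃ (MvPolynomial σ K)}
    (hAB : LinearMap.ker (Matrix.toLin' A) = LinearMap.range (Matrix.toLin' B))
    (hBC : LinearMap.ker (Matrix.toLin' B) = LinearMap.range (Matrix.toLin' C))
    (hC : ∀ r c, constantCoeff (C r c) = 0)
    (hB : ∀ r c, ∀ m ∈ (B r c).support, d₁ r + m = d₂ c) (c : ι₂) :
    d₂ c = (Finset.univ.filter fun r => B r c ≠ 0).sup d₁ := by
  refine le_antisymm ?_ (Finset.sup_le fun r hr =>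
    le_of_ne_zero_of_homogeneous hB (Finset.mem_filter.mp hr).2)
  by_contra hlt
  obtain ⟨j, hj⟩ := not_forall.mp (mt Finsupp.le_def.mpr hlt)
  refine not_forall_dvd_of_ker_eq_range (𝔪 := RingHom.ker (constantCoeff (σ := σ) (R := K)))
    hAB hBC (RingHom.ker_ne_top _) hC (constantCoeff_X (R := K) j) isRegular_X.left c fun r => ?_
  by_cases hr : B r c = 0
  · exact hr ▸ dvd_zero _
  · refine X_dvd_of_homogeneous_of_lt hB (lt_of_le_of_lt ?_ (not_le.mp hj))
    exact Finsupp.le_def.mp (Finset.le_sup (Finset.mem_filter.mpr ⟨Finset.mem_univ r, hr⟩)) j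

end Multigraded

/-- The resolution is encoded by matrices `A i : F_{i+1} → F_i` between free modules whose
basis vectors have multidegrees `deg i`; `hmin` is minimality and `M = coker (A 0)`. -/
theorem stmt12 (K : Type*) [Field K] (n : ℕ) (Γ : Set (Fin n →₀ ℕ))
    (hΓ : ∀ u ∈ Γ, ∀ v ∈ Γ, ∃ w ∈ Γ, ∀ i, w i = max (u i) (v i))
    (b : ℕ → ℕ) (deg : (i : ℕ) → Fin (b i) → (Fin n →₀ ℕ))
    (A : (i : ℕ) → Matrix (Fin (b i)) (Fin (b (i + 1))) (MvPolynomial (Fin n) K))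
    (hhom : ∀ (i : ℕ) (r : Fin (b i)) (c : Fin (b (i + 1))),
      ∀ m ∈ (A i r c).support, deg i r + m = deg (i + 1) c)
    (hmin : ∀ (i : ℕ) (r : Fin (b i)) (c : Fin (b (i + 1))),
      MvPolynomial.coeff 0 (A i r c) = 0)
    (hexact : ∀ i : ℕ,
      LinearMap.ker (Matrix.toLin' (A i)) = LinearMap.range (Matrix.toLin' (A (i + 1))))
    (hΓ0 : ∀ r : Fin (b 0), deg 0 r ∈ Γ)
    (hΓ1 : ∀ c : Fin (b 1), deg 1 c ∈ Γ) :
    ∀ (i : ℕ) (r : Fin (b i)), deg i r ∈ Γ := by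
  have hΓsup : SupClosed Γ := fun u hu v hv => by
    obtain ⟨w, hw, hw_max⟩ := hΓ u hu v hv
    exact (Finsupp.ext hw_max : w = u ⊔ v) ▸ hw
  intro i
  induction i using Nat.twoStepInduction with
  | zero => exact hΓ0
  | one => exact hΓ1
  | more i _ ih =>
    intro c
    rw [Matrix.eq_sup_of_homogeneous_of_ker_eq_range (hexact i) (hexact (i + 1)) (hmin (i + 2))
      (hhom (i + 1)) c]
    have hmin' : ∀ r c, A (i + 2) r c ∈ RingHom.ker (constantCoeff (σ := Fin n) (R := K)) :=
      hmin (i + 2)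
    obtain ⟨r, hr⟩ := Matrix.exists_ne_zero_of_ker_eq_range (hexact (i + 1))
      (RingHom.ker_ne_top _) hmin' c
    refine hΓsup.finsetSup_mem ?_ fun r _ => ih r
    exact ⟨r, by simpa using hr⟩
end

section
/- Let E be the exterior algebra on K-vector space V and let a be a squarefree monomial with support L_a ⊆ {e_1,...,e_n}. The Cartan complex ··· → D_2(L_a) ⊗ E(-a) → L_a ⊗ E(-a) → E(-a) → E/(supp a)(-a) → 0, with differentials induced by the diagonal maps D_{l+1}(L_a) → D_l(L_a) ⊗ L_a followed by multiplication in E, is a minimal free resolution of the cyclic module E_a = E/(supp(a))(-a). -/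
set_option maxHeartbeats 1600000

namespace Stmt14Aux

variable {K : Type*} [Field K] {n : ℕ}

def ee (K : Type*) [Field K] {n : ℕ} (i : Fin n) : ExteriorAlgebra K (Fin n → K) :=
  ExteriorAlgebra.ι K (Pi.single i 1)

noncomputable def ct (K : Type*) [Field K] {n : ℕ} (i : Fin n) :
    ExteriorAlgebra K (Fin n → K) →ₗ[K] ExteriorAlgebra K (Fin n → K) :=
  CliffordAlgebra.contractLeft (LinearMap.proj i)

lemma ct_e_mul (i j : Fin n) (z : ExteriorAlgebra K (Fin n → K)) :
    ct K i (ee K j * z) = (if i = j then z else 0) - ee K j * ct K i z := by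
  have := CliffordAlgebra.contractLeft_ι_mul (Q := (0 : QuadraticForm K (Fin n → K)))
    (d := LinearMap.proj i) (Pi.single j (1:K)) z
  simp only [LinearMap.proj_apply, Pi.single_apply] at this
  simpa [ct, ee, ite_smul] using this

lemma e_anticomm (i j : Fin n) (z : ExteriorAlgebra K (Fin n → K)) :
    ee K i * (ee K j * z) = -(ee K j * (ee K i * z)) := by
  have h : ee K i * ee K j = -(ee K j * ee K i) := by
    unfold ee
    exact eq_neg_of_add_eq_zero_left (ExteriorAlgebra.ι_add_mul_swap _ _)
  rw [← mul_assoc, h, neg_mul, mul_assoc]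

lemma e_sq_mul (i : Fin n) (z : ExteriorAlgebra K (Fin n → K)) :
    ee K i * (ee K i * z) = 0 := by
  rw [← mul_assoc, ee, ExteriorAlgebra.ι_sq_zero, zero_mul]

def deg (c : Fin n →₀ ℕ) : ℕ := c.sum fun _ m => m

lemma deg_add (c d : Fin n →₀ ℕ) : deg (c + d) = deg c + deg d :=
  Finsupp.sum_add_index' (fun _ => rfl) (fun _ _ _ => rfl)

lemma deg_single (i : Fin n) : deg (Finsupp.single i 1) = 1 :=
  Finsupp.sum_single_index rfl

lemma deg_eq_zero {c : Fin n →₀ ℕ} (h : deg c = 0) : c = 0 := by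
  ext a
  by_contra ha
  have hmem : a ∈ c.support := Finsupp.mem_support_iff.mpr (by simpa using ha)
  have := Finset.sum_eq_zero_iff.mp h a hmem
  exact ha (by simpa using this)


lemma apply_add_single_self (c : Fin n →₀ ℕ) (i : Fin n) :
    (c + Finsupp.single i (1:ℕ)) i = c i + 1 := by
  simp [Finsupp.single_apply]

lemma apply_add_single_ne (c : Fin n →₀ ℕ) {i j : Fin n} (h : j ≠ i) :
    (c + Finsupp.single j (1:ℕ)) i = c i := by
  simp [Finsupp.single_apply, h]

lemma key (A : Finset (Fin n)) (l : ℕ) :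
    ∀ x : (Fin n →₀ ℕ) → ExteriorAlgebra K (Fin n → K),
    (∀ c, x c ≠ 0 → c.support ⊆ A ∧ deg c = l + 1) →
    (∀ c, ∑ j ∈ A, ee K j * x (c + Finsupp.single j 1) = 0) →
    ∃ y : (Fin n →₀ ℕ) → ExteriorAlgebra K (Fin n → K),
      (∀ c, y c ≠ 0 → c.support ⊆ A ∧ deg c = l + 2) ∧
      ∀ c, x c = ∑ j ∈ A, ee K j * y (c + Finsupp.single j 1) := by
  induction A using Finset.induction_on with
  | empty =>
      intro x hlev _
      refine ⟨0, by simp, fun c => ?_⟩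
      rw [Finset.sum_empty]
      by_contra h
      obtain ⟨h1, h2⟩ := hlev c h
      have hc0 : c = 0 := by
        rw [← Finsupp.support_eq_empty]
        exact Finset.subset_empty.mp h1
      rw [hc0] at h2
      simp [deg, Finsupp.sum_zero_index] at h2
  | @insert i A' hiA' IH =>
      intro x hlev hcyc
      classical
      -- the contracted identity
      have hctr : ∀ c, x (c + Finsupp.single i 1) =
          ee K i * ct K i (x (c + Finsupp.single i 1)) +
          ∑ j ∈ A', ee K j * ct K i (x (c + Finsupp.single j 1)) := by
        intro c
        have h0 := hcyc c
        rw [Finset.sum_insert hiA'] at h0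
        have h1 := congrArg (ct K i) h0
        rw [map_add, map_sum, map_zero, ct_e_mul, if_pos rfl] at h1
        rw [Finset.sum_congr rfl (fun j hj => by
          rw [ct_e_mul, if_neg (by rintro rfl; exact hiA' hj), zero_sub])] at h1
        rw [Finset.sum_neg_distrib, ← sub_eq_add_neg, sub_sub, sub_eq_zero] at h1
        exact h1
      obtain ⟨Qx, hQpos, hQneg⟩ :
          ∃ Qx : (Fin n →₀ ℕ) → ExteriorAlgebra K (Fin n → K),
            (∀ c, c i = 0 → Qx c = x c - ee K i * ct K i (x c)) ∧
            (∀ c, c i ≠ 0 → Qx c = 0) :=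
        ⟨fun c => if c i = 0 then x c - ee K i * ct K i (x c) else 0,
          fun c h => if_pos h, fun c h => if_neg h⟩
      have hQlev : ∀ c, Qx c ≠ 0 → c.support ⊆ A' ∧ deg c = l + 1 := by
        intro c hc
        by_cases hci : c i = 0
        · rw [hQpos c hci] at hc
          have hx0 : x c ≠ 0 := by
            intro h; rw [h, map_zero, mul_zero, sub_zero] at hc; exact hc rfl
          obtain ⟨h1, h2⟩ := hlev c hx0
          refine ⟨fun a ha => ?_, h2⟩
          rcases Finset.mem_insert.mp (h1 ha) with h | h
          · exact absurd (Finsupp.mem_support_iff.mp (h ▸ ha)) (by simpa [h] using hci)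
          · exact h
        · exact absurd (hQneg c hci) hc
      have hQcyc : ∀ c, ∑ j ∈ A', ee K j * Qx (c + Finsupp.single j 1) = 0 := by
        intro c
        by_cases hci : c i = 0
        · have hterm : ∀ j ∈ A', ee K j * Qx (c + Finsupp.single j 1) =
              ee K j * x (c + Finsupp.single j 1)
              - ee K j * (ee K i * ct K i (x (c + Finsupp.single j 1))) := by
            intro j hj
            have hji : (c + Finsupp.single j (1:ℕ)) i = 0 := by
              rw [apply_add_single_ne c (by rintro rfl; exact hiA' hj)]; exact hci
            rw [hQpos _ hji, mul_sub]
          rw [Finset.sum_congr rfl hterm, Finset.sum_sub_distrib]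
          have hA : ∑ j ∈ A', ee K j * x (c + Finsupp.single j 1)
              = -(ee K i * x (c + Finsupp.single i 1)) := by
            have h0 := hcyc c
            rw [Finset.sum_insert hiA'] at h0
            exact eq_neg_of_add_eq_zero_right h0
          have hB : ∑ j ∈ A', ee K j * (ee K i * ct K i (x (c + Finsupp.single j 1)))
              = -(ee K i * x (c + Finsupp.single i 1)) := by
            rw [Finset.sum_congr rfl (fun j _ => e_anticomm j i _), Finset.sum_neg_distrib,
              ← Finset.mul_sum]
            rw [show ∑ j ∈ A', ee K j * ct K i (x (c + Finsupp.single j 1))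
              = x (c + Finsupp.single i 1)
                - ee K i * ct K i (x (c + Finsupp.single i 1)) from
                (eq_sub_of_add_eq (by rw [add_comm]; exact (hctr c).symm))]
            rw [mul_sub, e_sq_mul, sub_zero]
          rw [hA, hB, sub_self]
        · have hterm : ∀ j ∈ A', ee K j * Qx (c + Finsupp.single j 1) = 0 := by
            intro j hj
            have hji : (c + Finsupp.single j (1:ℕ)) i ≠ 0 := by
              rw [apply_add_single_ne c (by rintro rfl; exact hiA' hj)]; exact hci
            rw [hQneg _ hji, mul_zero]
          rw [Finset.sum_congr rfl hterm, Finset.sum_const_zero]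
      obtain ⟨y', hy'lev, hy'eq⟩ := IH Qx hQlev hQcyc
      obtain ⟨w, hwpos, hwneg⟩ :
          ∃ w : (Fin n →₀ ℕ) → ExteriorAlgebra K (Fin n → K),
            (∀ c : Fin n →₀ ℕ, c i ≠ 0 → w c = ct K i (x (c - Finsupp.single i 1))) ∧
            (∀ c : Fin n →₀ ℕ, c i = 0 → w c = 0) :=
        ⟨fun c => if c i = 0 then 0 else ct K i (x (c - Finsupp.single i 1)),
          fun c h => if_neg h, fun c h => if_pos h⟩
      refine ⟨fun c => w c + y' c, ?_, ?_⟩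
      · intro c hc
        beta_reduce at hc
        by_cases hwc : w c = 0
        · rw [hwc, zero_add] at hc
          obtain ⟨h1, h2⟩ := hy'lev c hc
          exact ⟨h1.trans (Finset.subset_insert i A'), h2⟩
        · by_cases hci : c i = 0
          · exact absurd (hwneg c hci) hwc
          · rw [hwpos c hci] at hwc
            have hxsub : x (c - Finsupp.single i 1) ≠ 0 := by
              intro h; rw [h, map_zero] at hwc; exact hwc rfl
            obtain ⟨h1, h2⟩ := hlev _ hxsub
            have hrec : c - Finsupp.single i 1 + Finsupp.single i 1 = c := by
              rw [Finsupp.sub_single_one_add hci, add_tsub_cancel_right]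
            constructor
            · intro a ha
              by_cases hai : a = i
              · exact hai ▸ Finset.mem_insert_self i A'
              · refine (Finset.mem_insert.mpr (Or.inr ?_) : a ∈ insert i A')
                have : a ∈ (c - Finsupp.single i 1).support := by
                  rw [Finsupp.mem_support_iff, Finsupp.tsub_apply, Finsupp.single_apply,
                    if_neg (Ne.symm hai)]
                  simpa using Finsupp.mem_support_iff.mp ha
                rcases Finset.mem_insert.mp (h1 this) with h | h
                · exact absurd h hai
                · exact h
            · have hd := deg_add (c - Finsupp.single i 1) (Finsupp.single i 1)
              rw [hrec, deg_single, h2] at hd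
              omega
      · intro c
        beta_reduce
        rw [Finset.sum_insert hiA']
        have h1 : (c + Finsupp.single i (1:ℕ)) i ≠ 0 := by
          rw [apply_add_single_self]; omega
        have h2 : y' (c + Finsupp.single i 1) = 0 := by
          by_contra h
          exact hiA' ((hy'lev _ h).1 (Finsupp.mem_support_iff.mpr h1))
        have hyci : w (c + Finsupp.single i 1) + y' (c + Finsupp.single i 1)
            = ct K i (x c) := by
          rw [h2, add_zero, hwpos _ h1, add_tsub_cancel_right]
        rw [hyci]
        have hsplit : ∑ j ∈ A', ee K j * (w (c + Finsupp.single j 1)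
              + y' (c + Finsupp.single j 1))
            = (∑ j ∈ A', ee K j * w (c + Finsupp.single j 1)) + Qx c := by
          rw [hy'eq c, ← Finset.sum_add_distrib]
          exact Finset.sum_congr rfl (fun j _ => by rw [mul_add])
        rw [hsplit]
        by_cases hci : c i = 0
        · have hterm : ∀ j ∈ A', ee K j * w (c + Finsupp.single j 1) = 0 := by
            intro j hj
            have hji : (c + Finsupp.single j (1:ℕ)) i = 0 := by
              rw [apply_add_single_ne c (by rintro rfl; exact hiA' hj)]; exact hci
            rw [hwneg _ hji, mul_zero]
          rw [Finset.sum_congr rfl hterm, Finset.sum_const_zero, zero_add, hQpos c hci]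
          abel
        · have hterm : ∀ j ∈ A', ee K j * w (c + Finsupp.single j 1)
              = ee K j * ct K i (x (c - Finsupp.single i 1 + Finsupp.single j 1)) := by
            intro j hj
            have hji : (c + Finsupp.single j (1:ℕ)) i ≠ 0 := by
              rw [apply_add_single_ne c (by rintro rfl; exact hiA' hj)]; exact hci
            rw [hwpos _ hji, Finsupp.sub_single_one_add hci]
          rw [Finset.sum_congr rfl hterm, hQneg c hci, add_zero]
          have h3 := hctr (c - Finsupp.single i 1)
          rw [Finsupp.sub_single_one_add hci, add_tsub_cancel_right] at h3
          exact h3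

end Stmt14Aux

namespace Stmt14Aux

variable {K : Type*} [Field K] {n : ℕ}

lemma e_comm_involute (i : Fin n) (z : ExteriorAlgebra K (Fin n → K)) :
    ee K i * z = CliffordAlgebra.involute z * ee K i := by
  induction z using CliffordAlgebra.induction with
  | algebraMap r => rw [CliffordAlgebra.involute.commutes, Algebra.commutes]
  | ι m =>
      rw [CliffordAlgebra.involute_ι, neg_mul]
      exact eq_neg_of_add_eq_zero_left (ExteriorAlgebra.ι_add_mul_swap _ _)
  | mul a b ha hb =>
      calc ee K i * (a * b) = (ee K i * a) * b := (mul_assoc _ _ _).symm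
        _ = (CliffordAlgebra.involute a * ee K i) * b := by rw [ha]
        _ = CliffordAlgebra.involute a * (ee K i * b) := mul_assoc _ _ _
        _ = CliffordAlgebra.involute a * (CliffordAlgebra.involute b * ee K i) := by rw [hb]
        _ = CliffordAlgebra.involute (a * b) * ee K i := by rw [map_mul, mul_assoc]
  | add a b ha hb => rw [map_add, mul_add, ha, hb, add_mul]

lemma comm_e_involute (i : Fin n) (z : ExteriorAlgebra K (Fin n → K)) :
    z * ee K i = ee K i * CliffordAlgebra.involute z := by
  rw [e_comm_involute, CliffordAlgebra.involute_involute]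

lemma e_mul_mem {A : Finset (Fin n)} {i : Fin n} (hi : i ∈ A)
    (z : ExteriorAlgebra K (Fin n → K)) :
    ee K i * z ∈ Ideal.span (ee K '' (A : Set (Fin n))) := by
  rw [e_comm_involute]
  exact Ideal.mul_mem_left _ _ (Ideal.subset_span ⟨i, hi, rfl⟩)

lemma dd_zero (A : Finset (Fin n)) (y : (Fin n →₀ ℕ) → ExteriorAlgebra K (Fin n → K))
    (c : Fin n →₀ ℕ) :
    ∑ i ∈ A, ee K i * ∑ j ∈ A, ee K j * y (c + Finsupp.single i 1 + Finsupp.single j 1)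
      = 0 := by
  have : ∀ i ∈ A, ee K i * ∑ j ∈ A, ee K j * y (c + Finsupp.single i 1 + Finsupp.single j 1)
      = ∑ j ∈ A, ee K i * (ee K j * y (c + Finsupp.single i 1 + Finsupp.single j 1)) :=
    fun i _ => Finset.mul_sum _ _ _
  rw [Finset.sum_congr rfl this, ← Finset.sum_product']
  refine Finset.sum_involution (fun p _ => (p.2, p.1)) ?_ ?_ ?_ ?_
  · rintro ⟨i, j⟩ _
    have hswap : c + Finsupp.single i 1 + Finsupp.single j 1
        = c + Finsupp.single j 1 + Finsupp.single i 1 := add_right_comm _ _ _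
    by_cases hij : i = j
    · subst hij
      rw [e_sq_mul, add_zero]
    · rw [e_anticomm i j, hswap, neg_add_cancel]
  · rintro ⟨i, j⟩ _ hne
    intro h
    have hij : i = j := by
      have := congrArg Prod.fst h
      simp at this
      exact this.symm
    subst hij
    exact hne (by rw [e_sq_mul])
  · rintro ⟨i, j⟩ hp
    simp only [Finset.mem_product] at hp ⊢
    exact ⟨hp.2, hp.1⟩
  · rintro ⟨i, j⟩ _
    rfl

lemma mem_span_repr {A : Finset (Fin n)} {z : ExteriorAlgebra K (Fin n → K)}
    (hz : z ∈ Ideal.span (ee K '' (A : Set (Fin n)))) :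
    ∃ w : Fin n → ExteriorAlgebra K (Fin n → K), z = ∑ i ∈ A, ee K i * w i := by
  classical
  induction hz using Submodule.span_induction with
  | mem z hzmem =>
      obtain ⟨i, hi, rfl⟩ := hzmem
      refine ⟨fun j => if j = i then 1 else 0, ?_⟩
      rw [Finset.sum_eq_single_of_mem i (Finset.mem_coe.mp hi)
        (fun j _ hji => by beta_reduce; rw [if_neg hji, mul_zero])]
      beta_reduce
      rw [if_pos rfl, mul_one]
  | zero => exact ⟨0, by simp⟩
  | add a b _ _ iha ihb =>
      obtain ⟨wa, hwa⟩ := iha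
      obtain ⟨wb, hwb⟩ := ihb
      exact ⟨fun i => wa i + wb i, by
        rw [hwa, hwb, ← Finset.sum_add_distrib]
        exact Finset.sum_congr rfl fun i _ => (mul_add _ _ _).symm⟩
  | smul r z _ ih =>
      obtain ⟨w, hw⟩ := ih
      refine ⟨fun i => CliffordAlgebra.involute r * w i, ?_⟩
      rw [smul_eq_mul, hw, Finset.mul_sum]
      refine Finset.sum_congr rfl fun i _ => ?_
      rw [← mul_assoc, comm_e_involute, mul_assoc]

end Stmt14Aux

namespace Stmt14Aux

variable {K : Type*} [Field K] {n : ℕ}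

lemma claim3 (A : Finset (Fin n)) (y : (Fin n →₀ ℕ) → ExteriorAlgebra K (Fin n → K))
    (c : Fin n →₀ ℕ) :
    ∑ i ∈ A, ee K i * y (c + Finsupp.single i 1) ∈ Ideal.span (ee K '' (A : Set (Fin n))) :=
  Ideal.sum_mem _ fun i hi => e_mul_mem hi _

lemma claim1 (A : Finset (Fin n)) (x : (Fin n →₀ ℕ) → ExteriorAlgebra K (Fin n → K))
    (hx : ∀ c, x c ≠ 0 → c.support ⊆ A ∧ c.sum (fun _ m => m) = 0) :
    x 0 ∈ Ideal.span (ee K '' (A : Set (Fin n))) ↔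
    ∃ y : (Fin n →₀ ℕ) → ExteriorAlgebra K (Fin n → K),
      (∀ c, y c ≠ 0 → c.support ⊆ A ∧ c.sum (fun _ m => m) = 1) ∧
      x = fun c => ∑ i ∈ A, ee K i * y (c + Finsupp.single i 1) := by
  classical
  constructor
  · intro hmem
    obtain ⟨w, hw⟩ := mem_span_repr hmem
    refine ⟨fun c => ∑ j ∈ A, if c = Finsupp.single j 1 then w j else 0, ?_, ?_⟩
    · intro c hc
      obtain ⟨j, hjA, hj⟩ := Finset.exists_ne_zero_of_sum_ne_zero hc
      have hcj : c = Finsupp.single j 1 := by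
        by_contra h; rw [if_neg h] at hj; exact hj rfl
      subst hcj
      constructor
      · rw [Finsupp.support_single_ne_zero j one_ne_zero]
        simpa using hjA
      · exact deg_single j
    · funext c
      by_cases hc0 : c = 0
      · subst hc0
        rw [hw]
        refine Finset.sum_congr rfl fun i hi => ?_
        congr 1
        beta_reduce
        rw [Finset.sum_eq_single_of_mem i hi (fun j _ hji => if_neg (fun h => by
          rw [zero_add] at h
          exact hji (Finsupp.single_left_injective one_ne_zero h.symm)))]
        rw [if_pos (by rw [zero_add])]
      · have hxc : x c = 0 := by
          by_contra h
          exact hc0 (deg_eq_zero ((hx c h).2))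
        rw [hxc]
        symm
        refine Finset.sum_eq_zero fun i _ => ?_
        have hz : (∑ j ∈ A, if c + Finsupp.single i 1 = Finsupp.single j 1
            then w j else 0) = 0 := by
          refine Finset.sum_eq_zero fun j _ => ?_
          rw [if_neg]
          intro h
          have hd := congrArg deg h
          rw [deg_add, deg_single, deg_single] at hd
          exact hc0 (deg_eq_zero (by omega))
        beta_reduce
        rw [hz, mul_zero]
  · rintro ⟨y, hy, rfl⟩
    exact claim3 A y 0

lemma claim2 (A : Finset (Fin n)) (l : ℕ)
    (x : (Fin n →₀ ℕ) → ExteriorAlgebra K (Fin n → K))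
    (hx : ∀ c, x c ≠ 0 → c.support ⊆ A ∧ c.sum (fun _ m => m) = l + 1) :
    ((fun c => ∑ i ∈ A, ee K i * x (c + Finsupp.single i 1))
        = (0 : (Fin n →₀ ℕ) → ExteriorAlgebra K (Fin n → K))) ↔
    ∃ y : (Fin n →₀ ℕ) → ExteriorAlgebra K (Fin n → K),
      (∀ c, y c ≠ 0 → c.support ⊆ A ∧ c.sum (fun _ m => m) = l + 2) ∧
      x = fun c => ∑ i ∈ A, ee K i * y (c + Finsupp.single i 1) := by
  constructor
  · intro h
    obtain ⟨y, hyl, hye⟩ := key A l x hx (fun c => congrFun h c)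
    exact ⟨y, hyl, funext hye⟩
  · rintro ⟨y, hy, rfl⟩
    funext c
    exact dd_zero A y c

end Stmt14Aux


/-- The Cartan complex is a minimal free resolution of `E_a = E/(supp a)(-a)` over the
exterior algebra `E = Λ(Kⁿ)`.  Here, for a squarefree monomial with support `A`, the
`l`-th term `D_l(L_a) ⊗ E(-a)` is realized as the functions `x : (Fin n →₀ ℕ) → E`
supported on exponent vectors `c` with `supp c ⊆ A` and `|c| = l` (the dual monomial
basis of the divided power `D_l(L_a)`), and the Cartan differential is
`(d x) c = Σ_{i ∈ A} e_i ∧ x (c + δᵢ)`.  The claims: exactness at the `0`-th step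
(the kernel of the augmentation onto `E/(supp a)` is the image of `d`), exactness at
every higher step, and minimality (the differential has image inside `m·F`, i.e. all
its components lie in the augmentation ideal). -/
theorem stmt14 (K : Type*) [Field K] (n : ℕ) (A : Finset (Fin n)) :
    let E := ExteriorAlgebra K (Fin n → K)
    let e : Fin n → E := fun i => ExteriorAlgebra.ι K (Pi.single i 1)
    let level : ℕ → ((Fin n →₀ ℕ) → E) → Prop := fun l x =>
      ∀ c : Fin n →₀ ℕ, x c ≠ 0 → c.support ⊆ A ∧ c.sum (fun _ m => m) = l
    let d : ((Fin n →₀ ℕ) → E) → ((Fin n →₀ ℕ) → E) := fun x c =>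
      ∑ i ∈ A, e i * x (c + Finsupp.single i 1)
    let J : Ideal E := Ideal.span (e '' ↑A)
    (∀ x, level 0 x → (x 0 ∈ J ↔ ∃ y, level 1 y ∧ x = d y)) ∧
    (∀ (l : ℕ) (x), level (l + 1) x →
      (d x = 0 ↔ ∃ y, level (l + 2) y ∧ x = d y)) ∧
    (∀ (y : (Fin n →₀ ℕ) → E) (c : Fin n →₀ ℕ), d y c ∈ J) := by
  intro E e level d J
  refine ⟨fun x hx => Stmt14Aux.claim1 A x hx, fun l x hx => Stmt14Aux.claim2 A l x hx,
    fun y c => Stmt14Aux.claim3 A y c⟩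
end
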